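/- If A is an n×n real matrix such that A + Aᵀ is positive definite, then A is H-stable: HA is positive stable for every symmetric positive definite matrix H. -/

import Mathlib

/-!
If `HAx = μx` with `x ≠ 0` (over `ℂ`), then `Ax = μ H⁻¹x`, so `x*Ax = μ · x*H⁻¹x`, where
`x*H⁻¹x` is a positive real because `H⁻¹` is positive definite. Since
`Re(x*Ax) = ½ x*(A + Aᵀ)x > 0`, this forces `Re μ > 0`; no square root of `H` is needed.
-/

open Matrix

/-- The complex spectrum of a real square matrix. -/
noncomputable def spec {n : ℕ} (A : Matrix (Fin n) (Fin n) ℝ) : Set ℂ :=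
  spectrum ℂ (A.map (Complex.ofReal : ℝ → ℂ))

/-- A real diagonal matrix with strictly positive diagonal entries. -/
def IsPosDiag {n : ℕ} (D : Matrix (Fin n) (Fin n) ℝ) : Prop :=
  D.IsDiag ∧ ∀ i, 0 < D i i

/-- All eigenvalues have positive real part. -/
def PosStable {n : ℕ} (A : Matrix (Fin n) (Fin n) ℝ) : Prop :=
  ∀ μ ∈ spec A, 0 < μ.re

/-- Multiplicative `D`-stability. -/
def DStable {n : ℕ} (A : Matrix (Fin n) (Fin n) ℝ) : Prop :=
  ∀ D, IsPosDiag D → PosStable (D * A)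

open scoped ComplexOrder

namespace Matrix

section RCLike

variable {n 𝕜 : Type*} [Fintype n] [RCLike 𝕜]

lemma star_dotProduct_conjTranspose_mulVec (B : Matrix n n 𝕜) (x : n → 𝕜) :
    star x ⬝ᵥ (Bᴴ *ᵥ x) = star (star x ⬝ᵥ (B *ᵥ x)) := by
  rw [dotProduct_mulVec, star_dotProduct, star_mulVec, star_star, dotProduct_comm]

lemma re_star_dotProduct_mulVec_pos {B : Matrix n n 𝕜} (hB : (B + Bᴴ).PosDef) {x : n → 𝕜}
    (hx : x ≠ 0) : 0 < RCLike.re (star x ⬝ᵥ (B *ᵥ x)) := by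
  have hsum := hB.dotProduct_mulVec_pos hx
  rw [add_mulVec, dotProduct_add, star_dotProduct_conjTranspose_mulVec, RCLike.star_def,
    RCLike.add_conj] at hsum
  have htwice : (0 : 𝕜) < ((2 * RCLike.re (star x ⬝ᵥ (B *ᵥ x)) : ℝ) : 𝕜) := by
    exact_mod_cast hsum
  linarith [RCLike.ofReal_pos.mp htwice]

lemma re_pos_of_mul_mulVec_eq_smul [DecidableEq n] {B H : Matrix n n 𝕜}
    (hB : (B + Bᴴ).PosDef) (hH : H.PosDef) {x : n → 𝕜} (hx : x ≠ 0) {μ : 𝕜}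
    (hμ : (H * B) *ᵥ x = μ • x) : 0 < RCLike.re μ := by
  have hBx : B *ᵥ x = μ • (H⁻¹ *ᵥ x) := by
    rw [← mulVec_smul, ← hμ, mulVec_mulVec, ← Matrix.mul_assoc,
      nonsing_inv_mul H ((isUnit_iff_isUnit_det H).mp hH.isUnit), Matrix.one_mul]
  obtain ⟨t, ht, hteq⟩ := RCLike.pos_iff_exists_ofReal.mp (hH.inv.dotProduct_mulVec_pos hx)
  have hform : RCLike.re (star x ⬝ᵥ (B *ᵥ x)) = RCLike.re μ * t := by
    rw [hBx, dotProduct_smul, smul_eq_mul, ← hteq, RCLike.re_mul_ofReal]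
  exact pos_of_mul_pos_left (hform ▸ re_star_dotProduct_mulVec_pos hB hx) ht.le

end RCLike

section OfReal

variable {n : Type*} [Fintype n]

lemma re_star_dotProduct_map_ofReal_mulVec (M : Matrix n n ℝ) (x : n → ℂ) :
    (star x ⬝ᵥ (M.map Complex.ofReal *ᵥ x)).re
      = (fun i ↦ (x i).re) ⬝ᵥ (M *ᵥ fun i ↦ (x i).re)
        + (fun i ↦ (x i).im) ⬝ᵥ (M *ᵥ fun i ↦ (x i).im) := by
  simp only [dotProduct, mulVec, map_apply, Pi.star_apply, Finset.mul_sum,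
    ← Finset.sum_add_distrib, Complex.re_sum]
  refine Finset.sum_congr rfl fun i _ ↦ Finset.sum_congr rfl fun j _ ↦ ?_
  simp [Complex.mul_re, Complex.mul_im]

lemma PosDef.map_ofReal {M : Matrix n n ℝ} (hM : M.PosDef) : (M.map Complex.ofReal).PosDef := by
  have hherm : (M.map Complex.ofReal).IsHermitian := hM.isHermitian.map _ fun _ ↦ by simp
  have hnonneg : ∀ v : n → ℝ, 0 ≤ v ⬝ᵥ (M *ᵥ v) := by
    simpa using hM.posSemidef.dotProduct_mulVec_nonneg
  have hpos : ∀ v : n → ℝ, v ≠ 0 → 0 < v ⬝ᵥ (M *ᵥ v) := by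
    simpa using fun v hv ↦ hM.dotProduct_mulVec_pos (x := v) hv
  refine posDef_iff_dotProduct_mulVec.mpr ⟨hherm, fun x hx ↦ Complex.lt_def.mpr ⟨?_, ?_⟩⟩
  · rw [Complex.zero_re, re_star_dotProduct_map_ofReal_mulVec]
    by_cases hre : (fun i ↦ (x i).re) = 0
    · have him : (fun i ↦ (x i).im) ≠ 0 := fun him ↦
        hx (funext fun i ↦ Complex.ext (congrFun hre i) (congrFun him i))
      linarith [hnonneg (fun i ↦ (x i).re), hpos _ him]
    · linarith [hpos _ hre, hnonneg (fun i ↦ (x i).im)]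
  · exact (hherm.im_star_dotProduct_mulVec_self x).symm

end OfReal

lemma conjTranspose_map_ofReal {m n : Type*} (A : Matrix m n ℝ) :
    (A.map Complex.ofReal)ᴴ = Aᵀ.map Complex.ofReal := by
  rw [← conjTranspose_map _ fun _ ↦ by simp, conjTranspose_eq_transpose_of_trivial]

lemma exists_mulVec_eq_smul_of_mem_spectrum {n K : Type*} [Fintype n] [DecidableEq n] [Field K]
    {M : Matrix n n K} {μ : K} (hμ : μ ∈ spectrum K M) : ∃ x ≠ 0, M *ᵥ x = μ • x := by
  rw [← spectrum_toLin', ← Module.End.hasEigenvalue_iff_mem_spectrum] at hμ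
  obtain ⟨x, hx⟩ := hμ.exists_hasEigenvector
  exact ⟨x, hx.2, by simpa using hx.apply_eq_smul⟩

end Matrix

/-- If A + Aᵀ is positive definite, then A is H-stable. -/
theorem stmt_15 {n : ℕ} (A : Matrix (Fin n) (Fin n) ℝ)
    (h : (A + Aᵀ).PosDef) :
    ∀ H : Matrix (Fin n) (Fin n) ℝ, H.PosDef → PosStable (H * A) := by
  intro H hH μ hμ
  obtain ⟨x, hx, hHAx⟩ := exists_mulVec_eq_smul_of_mem_spectrum hμ
  have hmap : (H * A).map Complex.ofReal = H.map Complex.ofReal * A.map Complex.ofReal :=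
    Matrix.map_mul (f := Complex.ofRealHom)
  have hsymm : (A.map Complex.ofReal + (A.map Complex.ofReal)ᴴ).PosDef := by
    rw [conjTranspose_map_ofReal, ← Matrix.map_add _ Complex.ofReal_add]
    exact h.map_ofReal
  exact re_pos_of_mul_mulVec_eq_smul hsymm hH.map_ofReal hx (hmap ▸ hHAx)
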